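/- arXiv:1103.2874 — 6 statements merged into one kernel-verified Lean document; each statement's English description precedes it below -/
import Mathlib

section
/- If (a_n)_{n≥0} belongs to v^q, then the tail variation tends to zero: lim_{m→∞} ‖(0,…,0, a_{m+1}−a_m, a_{m+2}−a_m, …)‖_{v^q} = 0; consequently the eventually constant sequences are dense in v^q. -/
open scoped ENNReal
open Filter

/-- Strong q-variation "norm" of a complex sequence, valued in `ℝ≥0∞`. -/
noncomputable def vq (q : ℝ) (a : ℕ → ℂ) : ℝ≥0∞ :=
  ⨆ n ∈ {n : ℕ → ℕ | StrictMono n ∧ n 0 = 0},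
    ((‖a (n 0)‖₊ : ℝ≥0∞) ^ q + ∑' k : ℕ, (‖a (n (k+1)) - a (n k)‖₊ : ℝ≥0∞) ^ q) ^ (1/q)

/-- The "tail" sequence `(0, …, 0, a_{m+1} - a_m, a_{m+2} - a_m, …)`. -/
def vqTail (a : ℕ → ℂ) (m : ℕ) : ℕ → ℂ := fun n => if n ≤ m then 0 else a n - a m

/-!
Let `V m` be the supremum of `∑ₖ |a (n (k+1)) - a (n k)|^q` over partitions `n` starting at `m`.
Gluing a finite piece of a partition from `m` to a partition from its endpoint shows that `V` is
antitone and that every `δ < V m` admits an `m'` with `δ + V m' ≤ V m`; so if `V` stayed above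
some `δ > 0`, then `V 0`, which is at most `vq q a ^ q`, would be infinite. The tail sequence at
`m` has variation at most `V m ^ (1/q)`, and `a` minus its tail at `m` is eventually constant.
-/

namespace Vq

open Finset

variable {q : ℝ} {a : ℕ → ℂ}

noncomputable def diffPow (q : ℝ) (a : ℕ → ℂ) (n : ℕ → ℕ) (k : ℕ) : ℝ≥0∞ :=
  (‖a (n (k + 1)) - a (n k)‖₊ : ℝ≥0∞) ^ q

noncomputable def qVarFrom (q : ℝ) (a : ℕ → ℂ) (m : ℕ) : ℝ≥0∞ :=
  ⨆ (n : ℕ → ℕ) (_ : StrictMono n ∧ n 0 = m), ∑' k, diffPow q a n k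

lemma tsum_diffPow_le_qVarFrom {n : ℕ → ℕ} (hn : StrictMono n) :
    ∑' k, diffPow q a n k ≤ qVarFrom q a (n 0) :=
  le_iSup₂ (f := fun n (_ : StrictMono n ∧ n 0 = _) => ∑' k, diffPow q a n k) n ⟨hn, rfl⟩

/-- Following `n` for `K` steps and then any partition from `n K` is again a partition. -/
lemma sum_diffPow_add_qVarFrom_le {n : ℕ → ℕ} (hn : StrictMono n) (K : ℕ) :
    ∑ j ∈ range K, diffPow q a n j + qVarFrom q a (n K) ≤ qVarFrom q a (n 0) := by
  rw [qVarFrom, ENNReal.add_biSup' ⟨(n K + ·), strictMono_id.const_add _, rfl⟩]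
  refine iSup₂_le fun n' ⟨hn', hn'0⟩ => ?_
  let p : ℕ → ℕ := fun j => if j ≤ K then n j else n' (j - K)
  have hp_low : ∀ j ≤ K, p j = n j := fun j hj => if_pos hj
  have hp_high : ∀ j, p (j + K) = n' j := fun j => by
    rcases j with _ | j
    · simp [p, hn'0]
    · simp [p]
  have hp_mono : StrictMono p := by
    refine strictMono_nat_of_lt_succ fun j => ?_
    rcases lt_or_ge j K with hj | hj
    · rw [hp_low j hj.le, hp_low (j + 1) hj]
      exact hn j.lt_succ_self
    · obtain ⟨i, rfl⟩ := Nat.exists_eq_add_of_le' hj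
      rw [hp_high, show i + K + 1 = i + 1 + K by omega, hp_high]
      exact hn' i.lt_succ_self
  calc ∑ j ∈ range K, diffPow q a n j + ∑' k, diffPow q a n' k
      = ∑ j ∈ range K, diffPow q a p j + ∑' k, diffPow q a p (k + K) := by
        congr 1
        · refine sum_congr rfl fun j hj => ?_
          rw [mem_range] at hj
          simp only [diffPow, hp_low j hj.le, hp_low (j + 1) hj]
        · refine tsum_congr fun k => ?_
          simp only [diffPow, show k + K + 1 = k + 1 + K by omega, hp_high]
    _ = ∑' k, diffPow q a p k := ENNReal.summable.sum_add_tsum_nat_add'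
    _ ≤ qVarFrom q a (n 0) := by
      simpa [hp_low 0 (Nat.zero_le K)] using tsum_diffPow_le_qVarFrom (a := a) hp_mono

lemma qVarFrom_antitone : Antitone (qVarFrom q a) := by
  intro m m' hmm'
  rcases hmm'.eq_or_lt with rfl | hlt
  · exact le_rfl
  let n : ℕ → ℕ := fun j => if j = 0 then m else m' + (j - 1)
  have hn : StrictMono n := strictMono_nat_of_lt_succ fun j => by
    rcases j with _ | j
    · simpa [n] using hlt
    · simp [n]
  simpa [n] using le_add_self.trans (sum_diffPow_add_qVarFrom_le (a := a) hn 1)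

lemma exists_add_qVarFrom_le {δ : ℝ≥0∞} {m : ℕ} (hδ : δ < qVarFrom q a m) :
    ∃ m', δ + qVarFrom q a m' ≤ qVarFrom q a m := by
  obtain ⟨n, hlt⟩ := lt_iSup_iff.mp hδ
  obtain ⟨⟨hn, rfl⟩, hsum⟩ := lt_iSup_iff.mp hlt
  rw [ENNReal.tsum_eq_iSup_nat] at hsum
  obtain ⟨K, hK⟩ := lt_iSup_iff.mp hsum
  exact ⟨n K, (add_le_add hK.le le_rfl).trans (sum_diffPow_add_qVarFrom_le hn K)⟩

lemma _root_.ENNReal.eq_top_of_forall_exists_add_le {ι : Type*} {f : ι → ℝ≥0∞} {δ : ℝ≥0∞}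
    (hδ : δ ≠ 0) (h : ∀ i, ∃ j, δ + f j ≤ f i) (i : ι) : f i = ∞ := by
  have hmul : ∀ k : ℕ, ∀ i, k * δ ≤ f i := by
    intro k
    induction k with
    | zero => simp
    | succ k ih =>
      intro i
      obtain ⟨j, hj⟩ := h i
      calc ((k + 1 : ℕ) : ℝ≥0∞) * δ = δ + k * δ := by push_cast; ring
        _ ≤ δ + f j := add_le_add le_rfl (ih j)
        _ ≤ f i := hj
  by_contra hi
  obtain ⟨k, hk⟩ := ENNReal.exists_nat_mul_gt hδ hi
  exact (hmul k i).not_gt hk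

lemma tendsto_qVarFrom_atTop (hfin : qVarFrom q a 0 ≠ ∞) :
    Tendsto (qVarFrom q a) atTop (nhds 0) := by
  have hinf := tendsto_atTop_iInf (qVarFrom_antitone (q := q) (a := a))
  suffices h : ⨅ m, qVarFrom q a m = 0 by rwa [h] at hinf
  by_contra hL
  obtain ⟨δ, hδ0, hδL⟩ := exists_between (pos_iff_ne_zero.mpr hL)
  have hstep : ∀ m, ∃ m', δ + qVarFrom q a m' ≤ qVarFrom q a m := fun m =>
    exists_add_qVarFrom_le (hδL.trans_le (iInf_le _ m))
  exact hfin (ENNReal.eq_top_of_forall_exists_add_le hδ0.ne' hstep 0)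

lemma qVarFrom_zero_le_vq_rpow (hq : 0 < q) : qVarFrom q a 0 ≤ vq q a ^ q := by
  refine iSup₂_le fun n hn => ?_
  have h : ((‖a (n 0)‖₊ : ℝ≥0∞) ^ q + ∑' k, diffPow q a n k) ^ (1 / q) ≤ vq q a :=
    le_iSup₂ (f := fun n (_ : n ∈ {n : ℕ → ℕ | StrictMono n ∧ n 0 = 0}) =>
      ((‖a (n 0)‖₊ : ℝ≥0∞) ^ q + ∑' k, diffPow q a n k) ^ (1 / q)) n hn
  rw [one_div, ENNReal.rpow_inv_le_iff hq] at h
  exact le_add_self.trans h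

lemma _root_.StrictMono.exists_apply_le_lt_apply_succ {n : ℕ → ℕ} (hn : StrictMono n) {m : ℕ}
    (hn0 : n 0 ≤ m) : ∃ K, n K ≤ m ∧ m < n (K + 1) := by
  by_contra! h
  have hle : ∀ K, n K ≤ m := fun K => Nat.rec hn0 (fun K ih => h K ih) K
  exact (hle (m + 1)).not_gt ((Nat.lt_succ_self m).trans_le (hn.id_le _))

lemma vqTail_apply (m i : ℕ) : vqTail a m i = a (max i m) - a m := by
  by_cases h : i ≤ m
  · simp [vqTail, h]
  · simp [vqTail, h, max_eq_left (not_le.mp h).le]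

lemma diffPow_vqTail (m : ℕ) (n : ℕ → ℕ) (k : ℕ) :
    diffPow q (vqTail a m) n k = diffPow q a (fun i => max (n i) m) k := by
  simp only [diffPow, vqTail_apply, sub_sub_sub_cancel_right]

/-- Up to the first index past `m` the tail sequence vanishes; from the index before it on,
`max (n ·) m` is a partition starting at `m`. -/
lemma tsum_diffPow_vqTail_le (hq : 0 < q) {m : ℕ} {n : ℕ → ℕ} (hn : StrictMono n)
    (hn0 : n 0 ≤ m) : ∑' k, diffPow q (vqTail a m) n k ≤ qVarFrom q a m := by
  obtain ⟨K, hK_le, hK_succ⟩ := hn.exists_apply_le_lt_apply_succ hn0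
  have hK_lt : ∀ k, m < n (k + 1 + K) := fun k => hK_succ.trans_le (hn.monotone (by omega))
  have hzero : ∀ k < K, diffPow q (vqTail a m) n k = 0 := by
    intro k hk
    have hle : ∀ i ≤ K, vqTail a m (n i) = 0 := fun i hi =>
      if_pos ((hn.monotone hi).trans hK_le)
    simp [diffPow, hle k hk.le, hle (k + 1) hk, ENNReal.zero_rpow_of_pos hq]
  let p : ℕ → ℕ := fun j => max (n (j + K)) m
  have hp_succ : ∀ j, p (j + 1) = n (j + 1 + K) := fun j => max_eq_left (hK_lt j).le
  have hp : StrictMono p := strictMono_nat_of_lt_succ fun j => by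
    rw [hp_succ]
    exact max_lt (hn (by omega)) (hK_lt j)
  have hp0 : p 0 = m := by simpa [p] using hK_le
  rw [← ENNReal.summable.sum_add_tsum_nat_add' (f := diffPow q (vqTail a m) n) (k := K),
    sum_eq_zero fun k hk => hzero k (mem_range.mp hk), zero_add]
  calc ∑' k, diffPow q (vqTail a m) n (k + K) = ∑' k, diffPow q a p k := by
        refine tsum_congr fun k => ?_
        rw [diffPow_vqTail]
        simp only [diffPow, p, show k + K + 1 = k + 1 + K by omega]
    _ ≤ qVarFrom q a m := hp0 ▸ tsum_diffPow_le_qVarFrom hp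

lemma vq_vqTail_le (hq : 0 < q) (m : ℕ) : vq q (vqTail a m) ≤ qVarFrom q a m ^ (1 / q) := by
  refine iSup₂_le fun n ⟨hn, hn0⟩ => ?_
  have hfirst : vqTail a m (n 0) = 0 := if_pos (hn0.trans_le (Nat.zero_le m))
  rw [hfirst, nnnorm_zero, ENNReal.coe_zero, ENNReal.zero_rpow_of_pos hq, zero_add]
  exact ENNReal.rpow_le_rpow (tsum_diffPow_vqTail_le hq hn (hn0.trans_le (Nat.zero_le m)))
    (by positivity)

lemma tendsto_vq_vqTail (hq : 0 < q) (hfin : vq q a ≠ ∞) :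
    Tendsto (fun m => vq q (vqTail a m)) atTop (nhds 0) := by
  have hvar : qVarFrom q a 0 ≠ ∞ :=
    ne_top_of_le_ne_top (ENNReal.rpow_ne_top_of_nonneg hq.le hfin) (qVarFrom_zero_le_vq_rpow hq)
  have hpow : Tendsto (fun m => qVarFrom q a m ^ (1 / q)) atTop (nhds 0) := by
    refine (ENNReal.continuous_rpow_const.tendsto' 0 0 ?_).comp (tendsto_qVarFrom_atTop hvar)
    exact ENNReal.zero_rpow_of_pos (one_div_pos.mpr hq)
  exact tendsto_of_tendsto_of_tendsto_of_le_of_le tendsto_const_nhds hpow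
    (fun _ => bot_le) (vq_vqTail_le hq)

lemma sub_comp_min_eq_vqTail (a : ℕ → ℂ) (m : ℕ) :
    (fun n => a n - a (min n m)) = vqTail a m := by
  funext n
  by_cases h : n ≤ m
  · simp [vqTail, h]
  · simp [vqTail, h, min_eq_right (not_le.mp h).le]

end Vq

/-- If `a ∈ v^q` then the tail variation tends to `0`; consequently the eventually
constant sequences are dense in `v^q`. -/
theorem stmt_2 (q : ℝ) (hq : 1 ≤ q) (a : ℕ → ℂ) (hfin : vq q a < ∞) :
    Tendsto (fun m => vq q (vqTail a m)) atTop (nhds 0) ∧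
      ∀ ε : ℝ≥0∞, 0 < ε →
        ∃ b : ℕ → ℂ, (∃ N : ℕ, ∀ n, N ≤ n → b n = b N) ∧
          vq q (fun n => a n - b n) < ε := by
  have htail := Vq.tendsto_vq_vqTail (zero_lt_one.trans_le hq) hfin.ne
  refine ⟨htail, fun ε hε => ?_⟩
  obtain ⟨m, hm⟩ := (htail.eventually (gt_mem_nhds hε)).exists
  refine ⟨fun n => a (min n m), ⟨m, fun n hn => by simp [min_eq_right hn]⟩, ?_⟩
  rwa [Vq.sub_comp_min_eq_vqTail]
end

section
/- If (δ_n)_{n≥0} is a complex sequence of finite strong 1-variation and (z_n)_{n≥0} is a complex sequence of finite strong q-variation (2 < q < ∞), then the pointwise product (δ_n z_n)_{n≥0} has finite strong q-variation and ‖(δ_n z_n)‖_{v^q} ≤ 3 ‖(δ_n)‖_{v^1} · ‖(z_n)‖_{v^q}. -/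
open scoped ENNReal

/-!
Along a subdivision, `δ_n z_n - δ_m z_m = δ_n (z_n - z_m) + (δ_n - δ_m) z_m`. The first term is
at most `sup |δ| ≤ ‖δ‖_{v^1}` times the increments of `z`; the second at most
`sup |z| ≤ 2 ‖z‖_{v^q}` times the increments of `δ`, whose `ℓ^q` norm is bounded by their `ℓ^1`
norm, hence by `‖δ‖_{v^1}`. Minkowski's inequality in `ℓ^q` adds the two contributions.
-/

noncomputable def lqNorm {ι : Type*} (q : ℝ) (f : ι → ℝ≥0∞) : ℝ≥0∞ :=
  (∑' i, f i ^ q) ^ (1 / q)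

section lqNorm

variable {ι : Type*} {q : ℝ}

lemma lqNorm_mono (hq : 0 ≤ q) {f g : ι → ℝ≥0∞} (h : f ≤ g) : lqNorm q f ≤ lqNorm q g := by
  unfold lqNorm
  gcongr with i
  exact h i

lemma le_lqNorm (hq : 0 < q) (f : ι → ℝ≥0∞) (i : ι) : f i ≤ lqNorm q f := by
  calc f i = (f i ^ q) ^ (1 / q) := by
        rw [← ENNReal.rpow_mul, mul_one_div_cancel hq.ne', ENNReal.rpow_one]
    _ ≤ lqNorm q f := by unfold lqNorm; gcongr; exact ENNReal.le_tsum i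

lemma lqNorm_one (f : ι → ℝ≥0∞) : lqNorm 1 f = ∑' i, f i := by
  simp [lqNorm]

lemma lqNorm_const_mul (hq : 0 < q) (c : ℝ≥0∞) (f : ι → ℝ≥0∞) :
    lqNorm q (fun i => c * f i) = c * lqNorm q f := by
  simp_rw [lqNorm, ENNReal.mul_rpow_of_nonneg _ _ hq.le, ENNReal.tsum_mul_left,
    ENNReal.mul_rpow_of_nonneg _ _ (one_div_nonneg.2 hq.le), ← ENNReal.rpow_mul,
    mul_one_div_cancel hq.ne', ENNReal.rpow_one]

lemma lqNorm_add_le (hq : 1 ≤ q) (f g : ι → ℝ≥0∞) :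
    lqNorm q (fun i => f i + g i) ≤ lqNorm q f + lqNorm q g := by
  let _ : MeasurableSpace ι := ⊤
  simpa [lqNorm, MeasureTheory.lintegral_count] using
    ENNReal.lintegral_Lp_add_le (μ := MeasureTheory.Measure.count)
      (Measurable.of_discrete (f := f)).aemeasurable
      (Measurable.of_discrete (f := g)).aemeasurable hq

lemma lqNorm_le_tsum (hq : 1 ≤ q) (f : ι → ℝ≥0∞) : lqNorm q f ≤ ∑' i, f i := by
  set S := ∑' i, f i
  have hpow (x : ℝ≥0∞) : x ^ q = x * x ^ (q - 1) := by
    simpa using ENNReal.rpow_add_of_nonneg (x := x) 1 (q - 1) zero_le_one (by linarith)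
  have hsum : ∑' i, f i ^ q ≤ S ^ q :=
    calc ∑' i, f i ^ q ≤ ∑' i, f i * S ^ (q - 1) := by
          gcongr with i
          rw [hpow]
          gcongr
          exact ENNReal.le_tsum i
      _ = S ^ q := by rw [ENNReal.tsum_mul_right, hpow]
  calc lqNorm q f ≤ (S ^ q) ^ (1 / q) := by unfold lqNorm; gcongr
    _ = S := by rw [← ENNReal.rpow_mul, mul_one_div_cancel (by linarith), ENNReal.rpow_one]

end lqNorm

def increments {E : Type*} [Sub E] (a : ℕ → E) (n : ℕ → ℕ) : ℕ → E
  | 0 => a (n 0)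
  | k + 1 => a (n (k + 1)) - a (n k)

lemma vq_eq_iSup (q : ℝ) (a : ℕ → ℂ) :
    vq q a = ⨆ n ∈ {n : ℕ → ℕ | StrictMono n ∧ n 0 = 0},
      lqNorm q (fun j => (‖increments a n j‖₊ : ℝ≥0∞)) := by
  unfold vq lqNorm
  congr! with n
  conv_rhs => rw [tsum_eq_zero_add' ENNReal.summable]
  rfl

lemma lqNorm_increments_le_vq {q : ℝ} {a : ℕ → ℂ} {n : ℕ → ℕ} (hn : StrictMono n ∧ n 0 = 0) :
    lqNorm q (fun j => (‖increments a n j‖₊ : ℝ≥0∞)) ≤ vq q a := by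
  rw [vq_eq_iSup]
  exact le_iSup₂_of_le n hn le_rfl

lemma tsum_nnnorm_increments_le_vq_one {a : ℕ → ℂ} {n : ℕ → ℕ} (hn : StrictMono n ∧ n 0 = 0) :
    ∑' j, (‖increments a n j‖₊ : ℝ≥0∞) ≤ vq 1 a := by
  simpa only [lqNorm_one] using lqNorm_increments_le_vq (q := 1) hn

lemma exists_nnnorm_le_increments {E : Type*} [SeminormedAddCommGroup E] (a : ℕ → E) (m : ℕ) :
    ∃ n : ℕ → ℕ, (StrictMono n ∧ n 0 = 0) ∧
      (‖a m‖₊ : ℝ≥0∞) ≤ ‖increments a n 0‖₊ + ‖increments a n 1‖₊ := by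
  cases m with
  | zero => exact ⟨id, ⟨strictMono_id, rfl⟩, le_self_add⟩
  | succ m =>
    refine ⟨fun k => if k = 0 then 0 else m + k, ⟨?_, rfl⟩, ?_⟩
    · refine strictMono_nat_of_lt_succ fun k => ?_
      rcases k with _ | k <;> simp
    · simp only [increments, if_pos]
      calc (‖a (m + 1)‖₊ : ℝ≥0∞) = ‖a 0 + (a (m + 1) - a 0)‖₊ := by rw [add_sub_cancel]
        _ ≤ ‖a 0‖₊ + ‖a (m + 1) - a 0‖₊ := by exact_mod_cast nnnorm_add_le _ _

lemma nnnorm_le_two_mul_vq {q : ℝ} (hq : 0 < q) (a : ℕ → ℂ) (m : ℕ) :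
    (‖a m‖₊ : ℝ≥0∞) ≤ 2 * vq q a := by
  obtain ⟨n, hn, ham⟩ := exists_nnnorm_le_increments a m
  calc (‖a m‖₊ : ℝ≥0∞) ≤ ‖increments a n 0‖₊ + ‖increments a n 1‖₊ := ham
    _ ≤ vq q a + vq q a := by
        gcongr <;> exact (le_lqNorm hq (fun j => (‖increments a n j‖₊ : ℝ≥0∞)) _).trans
          (lqNorm_increments_le_vq hn)
    _ = 2 * vq q a := (two_mul _).symm

lemma nnnorm_le_vq_one (a : ℕ → ℂ) (m : ℕ) : (‖a m‖₊ : ℝ≥0∞) ≤ vq 1 a := by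
  obtain ⟨n, hn, ham⟩ := exists_nnnorm_le_increments a m
  calc (‖a m‖₊ : ℝ≥0∞) ≤ ‖increments a n 0‖₊ + ‖increments a n 1‖₊ := ham
    _ ≤ ∑' j, (‖increments a n j‖₊ : ℝ≥0∞) := by
        simpa [Finset.sum_range_succ] using
          ENNReal.sum_le_tsum (f := fun j => (‖increments a n j‖₊ : ℝ≥0∞)) (Finset.range 2)
    _ ≤ vq 1 a := tsum_nnnorm_increments_le_vq_one hn

lemma nnnorm_increments_mul_le {R : Type*} [SeminormedRing R] {δ z : ℕ → R} {D C : ℝ≥0∞}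
    (hδ : ∀ m, (‖δ m‖₊ : ℝ≥0∞) ≤ D) (hz : ∀ m, (‖z m‖₊ : ℝ≥0∞) ≤ C) (n : ℕ → ℕ) (j : ℕ) :
    (‖increments (fun m => δ m * z m) n j‖₊ : ℝ≥0∞)
      ≤ D * ‖increments z n j‖₊ + C * ‖increments δ n j‖₊ := by
  cases j with
  | zero =>
    calc (‖δ (n 0) * z (n 0)‖₊ : ℝ≥0∞) ≤ ‖δ (n 0)‖₊ * ‖z (n 0)‖₊ := by
          exact_mod_cast nnnorm_mul_le _ _
      _ ≤ D * ‖z (n 0)‖₊ := by gcongr; exact hδ _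
      _ ≤ _ := le_self_add
  | succ k =>
    have hprod : δ (n (k + 1)) * z (n (k + 1)) - δ (n k) * z (n k)
        = δ (n (k + 1)) * (z (n (k + 1)) - z (n k)) + (δ (n (k + 1)) - δ (n k)) * z (n k) := by
      noncomm_ring
    calc (‖δ (n (k + 1)) * z (n (k + 1)) - δ (n k) * z (n k)‖₊ : ℝ≥0∞)
        ≤ ‖δ (n (k + 1))‖₊ * ‖z (n (k + 1)) - z (n k)‖₊
          + ‖δ (n (k + 1)) - δ (n k)‖₊ * ‖z (n k)‖₊ := by
          rw [hprod]
          exact_mod_cast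
            (nnnorm_add_le _ _).trans (add_le_add (nnnorm_mul_le _ _) (nnnorm_mul_le _ _))
      _ ≤ D * ‖z (n (k + 1)) - z (n k)‖₊ + ‖δ (n (k + 1)) - δ (n k)‖₊ * C := by
          gcongr
          exacts [hδ _, hz _]
      _ = _ := by rw [mul_comm _ C]; rfl

theorem stmt_5_general (q : ℝ) (hq : 2 < q) (δ z : ℕ → ℂ) :
    vq q (fun n => δ n * z n) ≤ 3 * vq 1 δ * vq q z := by
  have hq1 : 1 ≤ q := by linarith
  have hq0 : 0 < q := by linarith
  rw [vq_eq_iSup]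
  refine iSup₂_le fun n hn => ?_
  calc lqNorm q (fun j => (‖increments (fun m => δ m * z m) n j‖₊ : ℝ≥0∞))
      ≤ lqNorm q (fun j => vq 1 δ * ‖increments z n j‖₊ + 2 * vq q z * ‖increments δ n j‖₊) :=
        lqNorm_mono hq0.le
          (nnnorm_increments_mul_le (nnnorm_le_vq_one δ) (nnnorm_le_two_mul_vq hq0 z) n)
    _ ≤ vq 1 δ * lqNorm q (fun j => ‖increments z n j‖₊)
          + 2 * vq q z * lqNorm q (fun j => ‖increments δ n j‖₊) := by
        rw [← lqNorm_const_mul hq0, ← lqNorm_const_mul hq0]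
        exact lqNorm_add_le hq1 _ _
    _ ≤ vq 1 δ * vq q z + 2 * vq q z * vq 1 δ := by
        gcongr
        · exact lqNorm_increments_le_vq hn
        · exact (lqNorm_le_tsum hq1 _).trans (tsum_nnnorm_increments_le_vq_one hn)
    _ = 3 * vq 1 δ * vq q z := by ring

/-- Multiplier lemma: `‖(δ_n z_n)‖_{v^q} ≤ 3 ‖(δ_n)‖_{v^1} ‖(z_n)‖_{v^q}`. -/
theorem stmt_5 (q : ℝ) (hq : 2 < q) (δ z : ℕ → ℂ)
    (hδ : vq 1 δ < ∞) (hz : vq q z < ∞) :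
    vq q (fun n => δ n * z n) ≤ 3 * vq 1 δ * vq q z :=
  stmt_5_general q hq δ z
end

section
/- Let H be a complex Hilbert space and T ∈ B(H) a normal operator. Suppose there is K > 0 such that |1 − z| ≤ K(1 − |z|) for all z in the spectrum of T. Then T is a contraction and n‖T^n − T^{n−1}‖ ≤ K·((n−1)/n)^{n−1} for all n ≥ 1; in particular sup_{n≥1} n‖T^n − T^{n−1}‖ < ∞ and T is power bounded and analytic. -/
lemma aux_amgm (m : ℕ) {t : ℝ} (h0 : 0 ≤ t) (h1 : t ≤ 1) :
    t ^ m * (1 - t) ≤ ((m : ℝ) / (m + 1)) ^ m * (1 / (m + 1)) := by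
  rcases Nat.eq_zero_or_pos m with rfl | hm
  · simp; linarith
  · set M : ℝ := (m : ℝ) with hMdef
    have hM : 0 < M := by rw [hMdef]; exact_mod_cast hm
    have hM1 : 0 < M + 1 := by linarith
    have hw₁ : (0:ℝ) ≤ M / (M + 1) := by positivity
    have hw₂ : (0:ℝ) ≤ 1 / (M + 1) := by positivity
    have hp₂ : (0:ℝ) ≤ M * (1 - t) := by nlinarith
    have hsum : M / (M + 1) + 1 / (M + 1) = 1 := by field_simp
    have hg := Real.geom_mean_le_arith_mean2_weighted hw₁ hw₂ h0 hp₂ hsum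
    have hrhs : M / (M + 1) * t + 1 / (M + 1) * (M * (1 - t)) = M / (M + 1) := by
      field_simp; ring
    rw [hrhs] at hg
    have hgle : (t ^ (M / (M+1)) * (M * (1 - t)) ^ ((1:ℝ) / (M+1))) ^ ((M+1:ℝ))
        ≤ (M / (M+1)) ^ ((M+1:ℝ)) :=
      Real.rpow_le_rpow (by positivity) hg (by positivity)
    rw [Real.mul_rpow (by positivity) (by positivity),
      ← Real.rpow_mul h0, ← Real.rpow_mul hp₂] at hgle
    have e1 : M / (M + 1) * (M + 1) = M := by field_simp
    have e2 : 1 / (M + 1) * (M + 1) = 1 := by field_simp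
    rw [e1, e2, Real.rpow_one, hMdef, Real.rpow_natCast] at hgle
    have hpow : ((M / (M+1)) : ℝ) ^ ((M+1:ℝ)) = (M / (M+1)) ^ (m+1) := by
      rw [← Real.rpow_natCast (M / (M+1)) (m+1)]
      norm_num [hMdef]
    rw [hpow] at hgle
    have h2 : t ^ m * (1 - t) ≤ (M / (M+1)) ^ (m+1) / M := by
      rw [le_div_iff₀ hM]; nlinarith [hgle]
    calc t ^ m * (1 - t) ≤ (M / (M+1)) ^ (m+1) / M := h2
      _ = (M / (M + 1)) ^ m * (1 / (M + 1)) := by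
          rw [pow_succ]; field_simp

/-- A normal Hilbert-space operator whose spectrum satisfies the Stolz-type
condition `|1-z| ≤ K(1-|z|)` is a contraction, satisfies
`n ‖Tⁿ - Tⁿ⁻¹‖ ≤ K ((n-1)/n)^(n-1)`, and is power bounded and analytic. -/
theorem stmt_9 {H : Type*} [NormedAddCommGroup H] [InnerProductSpace ℂ H]
    [CompleteSpace H] (T : H →L[ℂ] H) (hT : IsStarNormal T)
    (K : ℝ) (hK : 0 < K)
    (hspec : ∀ z ∈ spectrum ℂ T, ‖1 - z‖ ≤ K * (1 - ‖z‖)) :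
    ‖T‖ ≤ 1 ∧
    (∀ n : ℕ, 1 ≤ n →
      (n : ℝ) * ‖T ^ n - T ^ (n - 1)‖ ≤ K * (((n : ℝ) - 1) / n) ^ (n - 1)) ∧
    (∃ C : ℝ, ∀ n : ℕ, 1 ≤ n → (n : ℝ) * ‖T ^ n - T ^ (n - 1)‖ ≤ C) ∧
    (∃ M : ℝ, ∀ n : ℕ, ‖T ^ n‖ ≤ M) := by
  have hle1 : ∀ z ∈ spectrum ℂ T, ‖z‖ ≤ 1 := by
    intro z hz
    have h1 := hspec z hz
    have h2 : (0:ℝ) ≤ ‖1 - z‖ := norm_nonneg _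
    nlinarith
  have hTnorm : ‖T‖ ≤ 1 := by
    have := norm_cfc_le (f := fun z : ℂ => z) (a := T) zero_le_one hle1
    rwa [cfc_id' ℂ T] at this
  have hmain : ∀ n : ℕ, 1 ≤ n →
      (n : ℝ) * ‖T ^ n - T ^ (n - 1)‖ ≤ K * (((n : ℝ) - 1) / n) ^ (n - 1) := by
    intro n hn
    obtain ⟨m, rfl⟩ : ∃ m, n = m + 1 := ⟨n - 1, (Nat.succ_pred_eq_of_pos hn).symm⟩
    have hsub : m + 1 - 1 = m := rfl
    rw [hsub]
    have hcast : ((m : ℝ) + 1) - 1 = (m : ℝ) := by ring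
    have hD : T ^ (m + 1) - T ^ m = cfc (fun z : ℂ => z ^ (m + 1) - z ^ m) T := by
      rw [cfc_sub _ _ T (by fun_prop) (by fun_prop), cfc_pow_id T, cfc_pow_id T]
    have hc : (0:ℝ) ≤ K * ((m : ℝ) / (m + 1)) ^ m * (1 / (m + 1)) := by positivity
    have hbound : ‖T ^ (m + 1) - T ^ m‖
        ≤ K * ((m : ℝ) / (m + 1)) ^ m * (1 / (m + 1)) := by
      rw [hD]
      refine norm_cfc_le hc fun z hz => ?_
      have hz1 := hspec z hz
      have hz2 := hle1 z hz
      have hz3 : (0:ℝ) ≤ 1 - ‖z‖ := by linarith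
      have heq : z ^ (m + 1) - z ^ m = z ^ m * (z - 1) := by ring
      calc ‖z ^ (m + 1) - z ^ m‖ = ‖z‖ ^ m * ‖1 - z‖ := by
            rw [heq, norm_mul, norm_pow, norm_sub_rev]
        _ ≤ ‖z‖ ^ m * (K * (1 - ‖z‖)) :=
            mul_le_mul_of_nonneg_left hz1 (by positivity)
        _ = K * (‖z‖ ^ m * (1 - ‖z‖)) := by ring
        _ ≤ K * (((m : ℝ) / (m + 1)) ^ m * (1 / (m + 1))) :=
            mul_le_mul_of_nonneg_left (aux_amgm m (norm_nonneg z) hz2) hK.le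
        _ = K * ((m : ℝ) / (m + 1)) ^ m * (1 / (m + 1)) := by ring
    have hn1 : (0:ℝ) < (m : ℝ) + 1 := by positivity
    push_cast
    rw [hcast]
    calc ((m : ℝ) + 1) * ‖T ^ (m + 1) - T ^ m‖
        ≤ ((m : ℝ) + 1) * (K * ((m : ℝ) / (m + 1)) ^ m * (1 / (m + 1))) :=
          mul_le_mul_of_nonneg_left hbound hn1.le
      _ = K * ((m : ℝ) / ((m : ℝ) + 1)) ^ m := by field_simp
  refine ⟨hTnorm, hmain, ⟨K, fun n hn => ?_⟩, ⟨1, fun n => ?_⟩⟩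
  · refine (hmain n hn).trans ?_
    have h1 : (((n : ℝ) - 1) / n) ^ (n - 1) ≤ 1 := by
      apply pow_le_one₀
      · apply div_nonneg _ (Nat.cast_nonneg n)
        have : (1:ℝ) ≤ n := by exact_mod_cast hn
        linarith
      · apply div_le_one_of_le₀ (by linarith) (Nat.cast_nonneg n)
    nlinarith
  · induction n with
    | zero =>
        simp only [pow_zero]
        calc ‖(1 : H →L[ℂ] H)‖ = ‖ContinuousLinearMap.id ℂ H‖ := rfl
          _ ≤ 1 := ContinuousLinearMap.norm_id_le
    | succ k ih =>
        calc ‖T ^ (k + 1)‖ = ‖T ^ k * T‖ := by rw [pow_succ]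
          _ ≤ ‖T ^ k‖ * ‖T‖ := norm_mul_le _ _
          _ ≤ 1 * 1 := mul_le_mul ih hTnorm (norm_nonneg _) zero_le_one
          _ = 1 := one_mul 1
end

section
/- Fix an integer m ≥ 2 and a strictly increasing sequence (n_k)_{k≥0} of positive integers. For an integer j ≥ 1, let J_j = {k ≥ 1 : n_k ≤ j ≤ 2 n_{k−1}}. Then Σ_{k ∈ J_j} (n_k^{m−1} − n_{k−1}^{m−1}) / n_k^{m−1} ≤ 2^{m−1}, and hence Λ_j := Σ_{k ∈ J_j} ((n_k^{m−1} − n_{k−1}^{m−1}) / n_k^{m−1})^2 ≤ 4^{m−1}. -/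
/-!
Write `a_k = n_k^{m-1}`. For `k ∈ J_j` we have `j / 2 ≤ n_{k-1} ≤ n_k ≤ j`, so every denominator
`a_k` is at least `(j/2)^{m-1}`, while the numerators `a_k - a_{k-1}` are the increments of a
monotone sequence over indices `≤ max J_j`, which telescope to at most `a_{max J_j} ≤ j^{m-1}`.
Hence the first sum is at most `j^{m-1} / (j/2)^{m-1} = 2^{m-1}`. Each summand lies in `[0, 1]`,
so squaring only decreases it and `Λ_j ≤ 2^{m-1} ≤ 4^{m-1}`.
-/

open Finset

section Increments

variable {α : Type*}

theorem Monotone.sum_sub_pred_le_of_subset_range [AddCommGroup α] [PartialOrder α]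
    [IsOrderedAddMonoid α] {f : ℕ → α} (hf : Monotone f) {S : Finset ℕ} {N : ℕ}
    (hS : S ⊆ range (N + 1)) : ∑ k ∈ S, (f k - f (k - 1)) ≤ f N - f 0 :=
  calc ∑ k ∈ S, (f k - f (k - 1))
      ≤ ∑ k ∈ range (N + 1), (f k - f (k - 1)) :=
        sum_le_sum_of_subset_of_nonneg hS fun k _ _ => sub_nonneg.2 (hf (Nat.sub_le k 1))
    _ = f N - f 0 := by
      simp only [sum_range_succ', Nat.add_sub_cancel, sub_self, add_zero, sum_range_sub]

theorem Monotone.sum_sub_pred_le [AddCommGroup α] [PartialOrder α] [IsOrderedAddMonoid α]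
    {f : ℕ → α} (hf : Monotone f) (hf0 : 0 ≤ f 0) {S : Finset ℕ} {C : α} (hC0 : 0 ≤ C)
    (hC : ∀ k ∈ S, f k ≤ C) : ∑ k ∈ S, (f k - f (k - 1)) ≤ C := by
  rcases S.eq_empty_or_nonempty with rfl | hS
  · simpa using hC0
  calc ∑ k ∈ S, (f k - f (k - 1))
      ≤ f (S.max' hS) - f 0 :=
        hf.sum_sub_pred_le_of_subset_range fun k hk => mem_range_succ_iff.2 (S.le_max' k hk)
    _ ≤ C := (sub_le_self _ hf0).trans (hC _ (S.max'_mem hS))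

variable [Field α] [LinearOrder α] [IsStrictOrderedRing α] {a : ℕ → α}

theorem Monotone.sum_sub_pred_div_self_le (ha : Monotone a) (ha0 : 0 ≤ a 0) {S : Finset ℕ}
    {c C : α} (hc : 0 < c) (hC0 : 0 ≤ C) (hS : ∀ k ∈ S, c ≤ a k ∧ a k ≤ C) :
    ∑ k ∈ S, (a k - a (k - 1)) / a k ≤ C / c :=
  calc ∑ k ∈ S, (a k - a (k - 1)) / a k
      ≤ ∑ k ∈ S, (a k - a (k - 1)) / c :=
        sum_le_sum fun k hk =>
          div_le_div_of_nonneg_left (sub_nonneg.2 (ha (Nat.sub_le k 1))) hc (hS k hk).1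
    _ = (∑ k ∈ S, (a k - a (k - 1))) / c := (sum_div ..).symm
    _ ≤ C / c :=
        div_le_div_of_nonneg_right (ha.sum_sub_pred_le ha0 hC0 fun k hk => (hS k hk).2) hc.le

theorem Monotone.sq_sub_pred_div_self_le (ha : Monotone a) (ha0 : 0 ≤ a 0) (k : ℕ) :
    ((a k - a (k - 1)) / a k) ^ 2 ≤ (a k - a (k - 1)) / a k := by
  have hpred : 0 ≤ a (k - 1) := ha0.trans (ha (Nat.zero_le _))
  have hk : 0 ≤ a k := hpred.trans (ha (Nat.sub_le k 1))
  exact pow_le_of_le_one (div_nonneg (sub_nonneg.2 (ha (Nat.sub_le k 1))) hk)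
    (div_le_one_of_le₀ (sub_le_self _ hpred) hk) two_ne_zero

end Increments

theorem stmt_13_general (m : ℕ) (nk : ℕ → ℕ) (hmono : StrictMono nk)
    (j : ℕ) (hj : 1 ≤ j) :
    ∑ k ∈ (Finset.range (j + 1)).filter
        (fun k => 1 ≤ k ∧ nk k ≤ j ∧ j ≤ 2 * nk (k - 1)),
      ((nk k : ℝ) ^ (m - 1) - (nk (k - 1) : ℝ) ^ (m - 1)) / (nk k : ℝ) ^ (m - 1)
        ≤ 2 ^ (m - 1) ∧
    ∑ k ∈ (Finset.range (j + 1)).filter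
        (fun k => 1 ≤ k ∧ nk k ≤ j ∧ j ≤ 2 * nk (k - 1)),
      (((nk k : ℝ) ^ (m - 1) - (nk (k - 1) : ℝ) ^ (m - 1)) / (nk k : ℝ) ^ (m - 1)) ^ 2
        ≤ 4 ^ (m - 1) := by
  set J := (Finset.range (j + 1)).filter (fun k => 1 ≤ k ∧ nk k ≤ j ∧ j ≤ 2 * nk (k - 1))
  set a : ℕ → ℝ := fun k => (nk k : ℝ) ^ (m - 1)
  have ha : Monotone a := fun k l hkl =>
    pow_le_pow_left₀ (Nat.cast_nonneg _) (Nat.cast_le.2 (hmono.monotone hkl)) _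
  have hwindow : ∀ k ∈ J, ((j : ℝ) / 2) ^ (m - 1) ≤ a k ∧ a k ≤ (j : ℝ) ^ (m - 1) := by
    intro k hk
    obtain ⟨-, -, hkj, hjk⟩ := mem_filter.1 hk
    have hjk' : j ≤ 2 * nk k := hjk.trans (by gcongr; exact hmono.monotone (Nat.sub_le k 1))
    have hhalf : (j : ℝ) / 2 ≤ nk k := by
      rw [div_le_iff₀ two_pos]; exact_mod_cast (by omega : j ≤ nk k * 2)
    exact ⟨pow_le_pow_left₀ (by positivity) hhalf _,
      pow_le_pow_left₀ (Nat.cast_nonneg _) (Nat.cast_le.2 hkj) _⟩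
  have hj0 : (0 : ℝ) < j := Nat.cast_pos.2 hj
  have hrel := ha.sum_sub_pred_div_self_le (by positivity) (by positivity) (by positivity) hwindow
  rw [← div_pow, div_div_cancel₀ hj0.ne'] at hrel
  refine ⟨hrel, ?_⟩
  calc _ ≤ _ := sum_le_sum fun k _ => ha.sq_sub_pred_div_self_le (by positivity) k
    _ ≤ 2 ^ (m - 1) := hrel
    _ ≤ 4 ^ (m - 1) := pow_le_pow_left₀ (by norm_num) (by norm_num) _

/-- The `Λ_j` estimate for `m ≥ 2`: with `J_j = {k ≥ 1 : n_k ≤ j ≤ 2 n_{k-1}}`,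
`Σ_{k ∈ J_j} (n_k^{m-1} - n_{k-1}^{m-1})/n_k^{m-1} ≤ 2^{m-1}` and
`Λ_j = Σ_{k ∈ J_j} ((n_k^{m-1} - n_{k-1}^{m-1})/n_k^{m-1})² ≤ 4^{m-1}`. -/
theorem stmt_13 (m : ℕ) (hm : 2 ≤ m) (nk : ℕ → ℕ) (hmono : StrictMono nk)
    (hpos : ∀ k, 0 < nk k) (j : ℕ) (hj : 1 ≤ j) :
    ∑ k ∈ (Finset.range (j + 1)).filter
        (fun k => 1 ≤ k ∧ nk k ≤ j ∧ j ≤ 2 * nk (k - 1)),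
      ((nk k : ℝ) ^ (m - 1) - (nk (k - 1) : ℝ) ^ (m - 1)) / (nk k : ℝ) ^ (m - 1)
        ≤ 2 ^ (m - 1) ∧
    ∑ k ∈ (Finset.range (j + 1)).filter
        (fun k => 1 ≤ k ∧ nk k ≤ j ∧ j ≤ 2 * nk (k - 1)),
      (((nk k : ℝ) ^ (m - 1) - (nk (k - 1) : ℝ) ^ (m - 1)) / (nk k : ℝ) ^ (m - 1)) ^ 2
        ≤ 4 ^ (m - 1) :=
  stmt_13_general m nk hmono j hj
end

section
/- Fix a strictly increasing sequence (n_k)_{k≥0} of positive integers and an integer j ≥ 1, and let J_j = {k ≥ 1 : n_k ≤ j ≤ 2 n_{k−1}}. Then Σ_{k ∈ J_j} (n_{k−1}^{−1} − n_k^{−1}) / n_k^{−1} ≤ 2, and hence Σ_{k ∈ J_j} ((n_{k−1}^{−1} − n_k^{−1})/n_k^{−1})^2 ≤ 4. -/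
private lemma tele (f : ℕ → ℝ) (a b : ℕ) (ha : 1 ≤ a) :
    ∑ k ∈ Finset.Ico a b, (f (k - 1) - f k) = f (a - 1) - f (max a b - 1) := by
  rcases le_or_gt a b with hab | hab
  · rw [Finset.sum_Ico_eq_sum_range]
    have h : ∀ i ∈ Finset.range (b - a), f (a + i - 1) - f (a + i)
        = (fun i => f (a + i - 1)) i - (fun i => f (a + i - 1)) (i + 1) := by
      intro i _
      have h1 : a + (i + 1) - 1 = a + i := by omega
      simp only [h1]
    rw [Finset.sum_congr rfl h, Finset.sum_range_sub']
    congr 2 <;> omega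
  · rw [Finset.Ico_eq_empty (by omega), Finset.sum_empty, max_eq_left hab.le, sub_self]

/-- The `Λ_j` estimate for `m = 0`: with `J_j = {k ≥ 1 : n_k ≤ j ≤ 2 n_{k-1}}`,
`Σ_{k ∈ J_j} (n_{k-1}⁻¹ - n_k⁻¹)/n_k⁻¹ ≤ 2` and
`Σ_{k ∈ J_j} ((n_{k-1}⁻¹ - n_k⁻¹)/n_k⁻¹)² ≤ 4`. -/
theorem stmt_14 (nk : ℕ → ℕ) (hmono : StrictMono nk)
    (hpos : ∀ k, 0 < nk k) (j : ℕ) (hj : 1 ≤ j) :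
    ∑ k ∈ (Finset.range (j + 1)).filter
        (fun k => 1 ≤ k ∧ nk k ≤ j ∧ j ≤ 2 * nk (k - 1)),
      ((nk (k - 1) : ℝ)⁻¹ - (nk k : ℝ)⁻¹) / (nk k : ℝ)⁻¹ ≤ 2 ∧
    ∑ k ∈ (Finset.range (j + 1)).filter
        (fun k => 1 ≤ k ∧ nk k ≤ j ∧ j ≤ 2 * nk (k - 1)),
      (((nk (k - 1) : ℝ)⁻¹ - (nk k : ℝ)⁻¹) / (nk k : ℝ)⁻¹) ^ 2 ≤ 4 := by
  set f : ℕ → ℝ := fun k => (nk k : ℝ)⁻¹ with hf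
  set S := (Finset.range (j + 1)).filter
      (fun k => 1 ≤ k ∧ nk k ≤ j ∧ j ≤ 2 * nk (k - 1)) with hS
  have hfpos : ∀ k, 0 < f k := by
    intro k
    have := hpos k
    positivity
  have hterm_nonneg : ∀ k, 1 ≤ k → 0 ≤ f (k - 1) - f k := by
    intro k hk
    have h1 : nk (k - 1) < nk k := hmono (by omega)
    have h2 : (0:ℝ) < nk (k - 1) := by exact_mod_cast hpos _
    exact sub_nonneg.2 (by
      apply inv_anti₀ h2
      exact_mod_cast h1.le)
  -- pointwise bound for k ∈ S
  have hpt : ∀ k ∈ S, (f (k - 1) - f k) / f k ≤ (j : ℝ) * (f (k - 1) - f k) := by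
    intro k hk
    simp only [hS, Finset.mem_filter, Finset.mem_range] at hk
    obtain ⟨hkj, hk1, hnkj, _⟩ := hk
    have : (f (k - 1) - f k) / f k = (nk k : ℝ) * (f (k - 1) - f k) := by
      rw [div_eq_mul_inv, hf]
      simp only []
      rw [inv_inv, mul_comm]
    rw [this]
    apply mul_le_mul_of_nonneg_right _ (hterm_nonneg k hk1)
    exact_mod_cast hnkj
  have hpt_nonneg : ∀ k ∈ S, 0 ≤ (f (k - 1) - f k) / f k := by
    intro k hk
    simp only [hS, Finset.mem_filter, Finset.mem_range] at hk
    exact div_nonneg (hterm_nonneg k hk.2.1) (hfpos k).le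
  have main : ∑ k ∈ S, (f (k - 1) - f k) / f k ≤ 2 := by
    rcases S.eq_empty_or_nonempty with he | hne
    · rw [he, Finset.sum_empty]; norm_num
    · set a := S.min' hne with ha
      have haS : a ∈ S := S.min'_mem hne
      have haS' := haS
      simp only [hS, Finset.mem_filter, Finset.mem_range] at haS'
      obtain ⟨haj, ha1, _, h2na⟩ := haS'
      calc ∑ k ∈ S, (f (k - 1) - f k) / f k
          ≤ ∑ k ∈ S, (j : ℝ) * (f (k - 1) - f k) := Finset.sum_le_sum hpt
        _ ≤ ∑ k ∈ Finset.Ico a (j + 1), (j : ℝ) * (f (k - 1) - f k) := by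
            apply Finset.sum_le_sum_of_subset_of_nonneg
            · intro k hk
              have hmin := S.min'_le k hk
              simp only [hS, Finset.mem_filter, Finset.mem_range] at hk
              exact Finset.mem_Ico.2 ⟨hmin, hk.1⟩
            · intro k hk _
              have hk1 : 1 ≤ k := le_trans ha1 (Finset.mem_Ico.1 hk).1
              exact mul_nonneg (by positivity) (hterm_nonneg k hk1)
        _ = (j : ℝ) * (f (a - 1) - f (max a (j + 1) - 1)) := by
            rw [← Finset.mul_sum, tele f a (j + 1) ha1]
        _ ≤ (j : ℝ) * f (a - 1) := by
            apply mul_le_mul_of_nonneg_left _ (by positivity)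
            have := (hfpos (max a (j + 1) - 1)).le
            linarith
        _ ≤ 2 := by
            have h2 : (0:ℝ) < nk (a - 1) := by exact_mod_cast hpos _
            rw [hf]
            rw [mul_inv_le_iff₀ h2]
            have : (j : ℝ) ≤ 2 * nk (a - 1) := by exact_mod_cast h2na
            linarith
  refine ⟨main, ?_⟩
  calc ∑ k ∈ S, ((f (k - 1) - f k) / f k) ^ 2
      ≤ ∑ k ∈ S, 2 * ((f (k - 1) - f k) / f k) := by
        apply Finset.sum_le_sum
        intro k hk
        have h0 := hpt_nonneg k hk
        have h2 : (f (k - 1) - f k) / f k ≤ 2 := by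
          -- term ≤ j*(f(k-1)-f k) ≤ ... easier: term = nk k / nk (k-1) - 1 ≤ 1
          simp only [hS, Finset.mem_filter, Finset.mem_range] at hk
          obtain ⟨hkj, hk1, hnkj, h2nk⟩ := hk
          have hp1 : (0:ℝ) < nk (k - 1) := by exact_mod_cast hpos _
          have hp2 : (0:ℝ) < nk k := by exact_mod_cast hpos _
          have hle : (nk k : ℝ) ≤ 2 * nk (k - 1) := by
            exact_mod_cast le_trans hnkj h2nk
          rw [hf]
          simp only []
          rw [div_le_iff₀ (by positivity : (0:ℝ) < ((nk k : ℝ))⁻¹), sub_le_iff_le_add,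
            show (2:ℝ) * (↑(nk k))⁻¹ + (↑(nk k))⁻¹ = 3 / (↑(nk k) : ℝ) by ring,
            show ((↑(nk (k - 1)) : ℝ))⁻¹ = 1 / (↑(nk (k - 1)) : ℝ) by ring,
            div_le_div_iff₀ hp1 hp2]
          nlinarith
        nlinarith
    _ = 2 * ∑ k ∈ S, (f (k - 1) - f k) / f k := by rw [Finset.mul_sum]
    _ ≤ 2 * 2 := by linarith
    _ = 4 := by norm_num
end

section
/- Let T be a power bounded operator on a Banach space X with ‖T^n − T^{n+1}‖ → 0 (in particular if T is analytic and power bounded), and suppose X = N(I−T) ⊕ closure(R(I−T)) with projection P_T onto N(I−T). Then T^n x → P_T x in norm for every x ∈ X. -/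
open Filter

/-- If `T` is power bounded with `‖Tⁿ - Tⁿ⁺¹‖ → 0`, and `X = N(I-T) ⊕ closure R(I-T)`
with projection `P` onto `N(I-T)`, then `Tⁿ x → P x` in norm for every `x`. -/
theorem stmt_16 {X : Type*} [NormedAddCommGroup X] [NormedSpace ℂ X]
    [CompleteSpace X] (T : X →L[ℂ] X)
    (hpb : ∃ M : ℝ, ∀ n : ℕ, ‖T ^ n‖ ≤ M)
    (hdiff : Tendsto (fun n : ℕ => ‖T ^ n - T ^ (n + 1)‖) atTop (nhds 0))
    (P : X →L[ℂ] X)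
    (hker : ∀ x, T (P x) = P x)
    (hran : ∀ x, x - P x ∈ closure (Set.range ((1 - T : X →L[ℂ] X)))) :
    ∀ x : X, Tendsto (fun n : ℕ => (T ^ n) x) atTop (nhds (P x)) := by
  obtain ⟨M, hM⟩ := hpb
  have hM0 : 0 ≤ M := le_trans (norm_nonneg _) (hM 0)
  intro x
  -- T^n fixes P x
  have hfix : ∀ n : ℕ, (T ^ n) (P x) = P x := by
    intro n
    induction n with
    | zero => simp
    | succ n ih =>
      rw [pow_succ']
      simp [ContinuousLinearMap.mul_apply, ih, hker]
  -- T^n (x - P x) → 0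
  have hzero : Tendsto (fun n : ℕ => (T ^ n) (x - P x)) atTop (nhds 0) := by
    rw [NormedAddCommGroup.tendsto_nhds_zero]
    intro ε hε
    set y := x - P x with hy
    have hyc := hran x
    rw [Metric.mem_closure_iff] at hyc
    obtain ⟨z, ⟨w, hw⟩, hz⟩ := hyc (ε / (2 * (M + 1))) (by positivity)
    -- eventually ‖T^n - T^(n+1)‖ * ‖w‖ < ε/2
    have h1 : Tendsto (fun n : ℕ => ‖T ^ n - T ^ (n + 1)‖ * ‖w‖) atTop (nhds 0) := by
      simpa using hdiff.mul_const ‖w‖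
    have h2 : ∀ᶠ n in atTop, ‖T ^ n - T ^ (n + 1)‖ * ‖w‖ < ε / 2 := by
      have := h1.eventually (gt_mem_nhds (show (0:ℝ) < ε / 2 by positivity))
      exact this
    filter_upwards [h2] with n hn
    have key : (T ^ n) y = (T ^ n) (y - z) + ((T ^ n) w - (T ^ (n+1)) w) := by
      rw [← hw]
      simp only [map_sub, ContinuousLinearMap.sub_apply, ContinuousLinearMap.one_apply]
      have : (T ^ (n+1)) w = (T ^ n) (T w) := by
        rw [pow_succ]; rfl
      rw [this]
      abel
    rw [key]
    calc ‖(T ^ n) (y - z) + ((T ^ n) w - (T ^ (n+1)) w)‖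
        ≤ ‖(T ^ n) (y - z)‖ + ‖(T ^ n) w - (T ^ (n+1)) w‖ := norm_add_le _ _
      _ ≤ ‖T ^ n‖ * ‖y - z‖ + ‖T ^ n - T ^ (n+1)‖ * ‖w‖ := by
          gcongr
          · exact (T ^ n).le_opNorm _
          · exact ((T ^ n - T ^ (n+1)).le_opNorm w).trans_eq (by simp)
      _ < ε / 2 + ε / 2 := by
          gcongr
          have hlt : ‖y - z‖ < ε / (2 * (M + 1)) := by
            rw [← dist_eq_norm]; exact hz
          calc ‖T ^ n‖ * ‖y - z‖ ≤ (M + 1) * ‖y - z‖ := by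
                gcongr
                · linarith [hM n]
            _ < (M + 1) * (ε / (2 * (M + 1))) :=
                mul_lt_mul_of_pos_left hlt (by positivity)
            _ = ε / 2 := by field_simp
      _ = ε := by ring
  have : (fun n : ℕ => (T ^ n) x) = fun n => (T ^ n) (x - P x) + P x := by
    funext n
    rw [map_sub, hfix n]
    abel
  rw [this]
  simpa using hzero.add_const (P x)
end
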